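/- arXiv:1007.0162 — 2 statements merged into one kernel-verified Lean document; each statement's English description precedes it below -/
import Mathlib

section
/- Let E be a uniformly convex Banach space with modulus of convexity δ_E. Then for all x, y in the closed unit ball B_1(0) with ‖x − y‖ = ε > 0 and for any β ∈ (0, 1/2], the closed ball of radius 2β·δ_E(ε) centered at (1−β)x + βy is contained in B_1(0). -/
open Set Metric

/-- Modulus of convexity of a normed space `E`. -/
noncomputable def modConv (E : Type*) [NormedAddCommGroup E] [NormedSpace ℝ E] (ε : ℝ) : ℝ :=
  sInf {d : ℝ | ∃ x y : E, ‖x‖ ≤ 1 ∧ ‖y‖ ≤ 1 ∧ ‖x - y‖ = ε ∧ d = 1 - ‖x + y‖ / 2}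

/-- `E` is uniformly convex: the modulus of convexity is positive on `(0,2]`. -/
def UnifConvexSpace (E : Type*) [NormedAddCommGroup E] [NormedSpace ℝ E] : Prop :=
  ∀ ε ∈ Set.Ioc (0:ℝ) 2, 0 < modConv E ε

/-- Modulus of nonconvexity of a set `A`. -/
noncomputable def modNonconv {E : Type*} [NormedAddCommGroup E] [NormedSpace ℝ E]
    (A : Set E) (ε : ℝ) : ℝ :=
  if ε = 0 then 0 else
    sInf {γ : ℝ | 0 < γ ∧ ∀ x₁ ∈ A, ∀ x₂ ∈ A, ‖x₁ - x₂‖ ≤ ε →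
      (Metric.closedBall (midpoint ℝ x₁ x₂) γ ∩ A).Nonempty}

/-- Modulus of convexity of a convex set `A`. -/
noncomputable def modConvSet {E : Type*} [NormedAddCommGroup E] [NormedSpace ℝ E]
    (A : Set E) (ε : ℝ) : ℝ :=
  sSup {δ : ℝ | 0 ≤ δ ∧ ∀ x₁ ∈ A, ∀ x₂ ∈ A, ‖x₁ - x₂‖ = ε →
      Metric.closedBall (midpoint ℝ x₁ x₂) δ ⊆ A}

/-- Lemma 1.1 (ball inclusion from uniform convexity). -/
theorem stmt0 {E : Type*} [NormedAddCommGroup E] [NormedSpace ℝ E] [CompleteSpace E]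
    (hE : UnifConvexSpace E)
    (x y : E) (hx : x ∈ Metric.closedBall (0:E) 1) (hy : y ∈ Metric.closedBall (0:E) 1)
    (ε : ℝ) (hε : ‖x - y‖ = ε) (hεpos : 0 < ε)
    (β : ℝ) (hβ : β ∈ Set.Ioc (0:ℝ) (1/2)) :
    Metric.closedBall ((1 - β) • x + β • y) (2 * β * modConv E ε) ⊆
      Metric.closedBall (0:E) 1 := by
  obtain ⟨hβ0, hβ2⟩ := hβ
  rw [Metric.mem_closedBall, dist_zero_right] at hx hy
  -- modConv E ε ≤ 1 - ‖x + y‖ / 2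
  have hbdd : BddBelow {d : ℝ | ∃ x y : E, ‖x‖ ≤ 1 ∧ ‖y‖ ≤ 1 ∧ ‖x - y‖ = ε ∧
      d = 1 - ‖x + y‖ / 2} := by
    refine ⟨0, ?_⟩
    rintro d ⟨a, b, ha, hb, -, rfl⟩
    have := norm_add_le a b
    linarith
  have hle : modConv E ε ≤ 1 - ‖x + y‖ / 2 :=
    csInf_le hbdd ⟨x, y, hx, hy, hε, rfl⟩
  intro z hz
  rw [Metric.mem_closedBall, dist_eq_norm] at hz
  rw [Metric.mem_closedBall, dist_zero_right]
  have hc : ‖(1 - β) • x + β • y‖ ≤ 1 - 2 * β * modConv E ε := by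
    have hrw : (1 - β) • x + β • y = (1 - 2 * β) • x + (2 * β) • ((1/2 : ℝ) • (x + y)) := by
      rw [smul_smul]
      module
    have h1 : ‖(1 - 2 * β) • x‖ ≤ 1 - 2 * β := by
      rw [norm_smul, Real.norm_eq_abs, abs_of_nonneg (by linarith)]
      nlinarith
    have h2 : ‖(2 * β) • ((1/2 : ℝ) • (x + y))‖ ≤ 2 * β * (1 - modConv E ε) := by
      rw [norm_smul, norm_smul, Real.norm_eq_abs, Real.norm_eq_abs,
        abs_of_nonneg (by linarith : (0:ℝ) ≤ 2 * β), abs_of_nonneg (by norm_num : (0:ℝ) ≤ 1/2)]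
      nlinarith [norm_nonneg (x + y)]
    calc ‖(1 - β) • x + β • y‖ ≤ ‖(1 - 2 * β) • x‖ + ‖(2 * β) • ((1/2 : ℝ) • (x + y))‖ := by
          rw [hrw]; exact norm_add_le _ _
      _ ≤ (1 - 2 * β) + 2 * β * (1 - modConv E ε) := add_le_add h1 h2
      _ = 1 - 2 * β * modConv E ε := by ring
  calc ‖z‖ ≤ ‖z - ((1 - β) • x + β • y)‖ + ‖(1 - β) • x + β • y‖ := by
        simpa using norm_add_le (z - ((1 - β) • x + β • y)) ((1 - β) • x + β • y)
    _ ≤ 2 * β * modConv E ε + (1 - 2 * β * modConv E ε) := add_le_add hz hc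
    _ = 1 := by ring
end

section
/- Let E be a uniformly convex Banach space with modulus of convexity δ_E. Then for any ε, η with 0 < ε/2 < η < ε < 2, one has δ_E(η)/η ≤ δ_E(ε)/ε − 2((ε−η)/(ε·η))·δ_E(r(ε)), where r(ε) = (1/4)(ε/2 − δ_E(ε)). -/
open Set Metric

noncomputable def rfun (E : Type*) [NormedAddCommGroup E] [NormedSpace ℝ E] (ε : ℝ) : ℝ :=
  (1/4) * (ε/2 - modConv E ε)

/-
Take a nearly extremal pair `x, y` for `δ_E(ε)` with midpoint `m`, and let `u = m / ‖m‖`.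
Since `‖m - u‖ = 1 - ‖m‖ ≈ δ_E(ε)`, both `x` and `y` lie at distance at least `r(ε)` from `u`,
so `‖x + u‖, ‖y + u‖ ≤ 2 (1 - δ_E(r(ε)))`. With `a = η/ε` and `b = 1 - a ≤ a`, the points
`a x + β u` and `a y + β u`, where `β = b (1 + 2 δ_E(r(ε)))`, still lie in the unit ball,
are `η` apart, and their midpoint is a multiple of `u` whose norm gives the bound.
-/

section

variable {E : Type*} [NormedAddCommGroup E]

lemma one_sub_norm_add_div_two_nonneg {x y : E} (hx : ‖x‖ ≤ 1) (hy : ‖y‖ ≤ 1) :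
    0 ≤ 1 - ‖x + y‖ / 2 := by
  linarith [norm_add_le x y]

variable [NormedSpace ℝ E]

lemma modConv_le {c : ℝ} {x y : E} (hx : ‖x‖ ≤ 1) (hy : ‖y‖ ≤ 1) (hxy : ‖x - y‖ = c) :
    modConv E c ≤ 1 - ‖x + y‖ / 2 :=
  csInf_le ⟨0, by rintro _ ⟨x, y, hx, hy, -, rfl⟩; exact one_sub_norm_add_div_two_nonneg hx hy⟩
    ⟨x, y, hx, hy, hxy, rfl⟩

lemma modConv_nonneg (c : ℝ) : 0 ≤ modConv E c :=
  Real.sInf_nonneg <| by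
    rintro _ ⟨x, y, hx, hy, -, rfl⟩
    exact one_sub_norm_add_div_two_nonneg hx hy

lemma modConv_le_of_le_norm_sub {c : ℝ} {x y : E} (hx : ‖x‖ ≤ 1) (hy : ‖y‖ ≤ 1) (hc : 0 ≤ c)
    (hxy : c ≤ ‖x - y‖) : modConv E c ≤ 1 - ‖x + y‖ / 2 := by
  set k := c / ‖x - y‖
  have hk0 : 0 ≤ k := div_nonneg hc (norm_nonneg _)
  have hk1 : k ≤ 1 := div_le_one_of_le₀ hxy (norm_nonneg _)
  have hball : ∀ {s t : ℝ}, 0 ≤ s → 0 ≤ t → s + t = 1 → ‖s • x + t • y‖ ≤ 1 := fun hs ht hst ↦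
    mem_closedBall_zero_iff.1 <| convex_closedBall (0 : E) 1
      (mem_closedBall_zero_iff.2 hx) (mem_closedBall_zero_iff.2 hy) hs ht hst
  have hdist : ‖((1 + k) / 2) • x + ((1 - k) / 2) • y - (((1 - k) / 2) • x + ((1 + k) / 2) • y)‖
      = c := by
    rw [show _ - _ = k • (x - y) by module, norm_smul, Real.norm_of_nonneg hk0,
      div_mul_cancel_of_imp fun h ↦ by linarith [h ▸ hxy]]
  have := modConv_le (hball (by linarith) (by linarith) (by ring))
    (hball (by linarith) (by linarith) (by ring)) hdist
  convert this using 4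
  module

lemma exists_norm_sub_eq_norm_add_eq [Nontrivial E] {c : ℝ} (hc0 : 0 ≤ c) (hc2 : c ≤ 2) :
    ∃ x y : E, ‖x‖ ≤ 1 ∧ ‖y‖ ≤ 1 ∧ ‖x - y‖ = c ∧ ‖x + y‖ = 2 - c := by
  obtain ⟨e, he⟩ := exists_norm_eq E zero_le_one
  refine ⟨e, (1 - c) • e, he.le, ?_, ?_, ?_⟩
  · rw [norm_smul, he, mul_one, Real.norm_eq_abs, abs_le]
    constructor <;> linarith
  · rw [show e - (1 - c) • e = c • e by module, norm_smul, he, mul_one,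
      Real.norm_of_nonneg hc0]
  · rw [show e + (1 - c) • e = (2 - c) • e by module, norm_smul, he, mul_one,
      Real.norm_of_nonneg (by linarith)]

lemma modConv_le_half [Nontrivial E] {c : ℝ} (hc0 : 0 ≤ c) (hc2 : c ≤ 2) :
    modConv E c ≤ c / 2 := by
  obtain ⟨x, y, hx, hy, hxy, hsum⟩ := exists_norm_sub_eq_norm_add_eq (E := E) hc0 hc2
  linarith [modConv_le hx hy hxy]

lemma modConv_zero [Nontrivial E] : modConv E 0 = 0 :=
  le_antisymm (by simpa using modConv_le_half (E := E) le_rfl zero_le_two) (modConv_nonneg 0)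

lemma exists_lt_modConv_add [Nontrivial E] {c θ : ℝ} (hc0 : 0 ≤ c) (hc2 : c ≤ 2) (hθ : 0 < θ) :
    ∃ x y : E, ‖x‖ ≤ 1 ∧ ‖y‖ ≤ 1 ∧ ‖x - y‖ = c ∧ 1 - ‖x + y‖ / 2 < modConv E c + θ := by
  obtain ⟨x, y, hx, hy, hxy, -⟩ := exists_norm_sub_eq_norm_add_eq (E := E) hc0 hc2
  have hne : {d : ℝ | ∃ x y : E, ‖x‖ ≤ 1 ∧ ‖y‖ ≤ 1 ∧ ‖x - y‖ = c ∧ d = 1 - ‖x + y‖ / 2}.Nonempty :=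
    ⟨_, x, y, hx, hy, hxy, rfl⟩
  obtain ⟨_, ⟨x, y, hx, hy, hxy, rfl⟩, h⟩ := Real.lt_sInf_add_pos hne hθ
  exact ⟨x, y, hx, hy, hxy, h⟩

lemma UnifConvexSpace.nontrivial (hE : UnifConvexSpace E) : Nontrivial E := by
  by_contra h
  rw [not_nontrivial_iff_subsingleton] at h
  refine (hE 2 ⟨two_pos, le_rfl⟩).ne' ?_
  rw [modConv, ← Real.sInf_empty]
  congr 1
  refine Set.eq_empty_of_forall_notMem ?_
  rintro _ ⟨x, y, -, -, hxy, -⟩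
  simp [Subsingleton.elim x y] at hxy

lemma norm_sub_div_two_sub_le_norm_sub_normalize {x y : E} (hx : ‖x‖ ≤ 1) (hy : ‖y‖ ≤ 1)
    (hxy : x + y ≠ 0) :
    ‖x - y‖ / 2 - (1 - ‖x + y‖ / 2) ≤ ‖x - ‖x + y‖⁻¹ • (x + y)‖ := by
  set u := ‖x + y‖⁻¹ • (x + y)
  have hu : ‖u‖ = 1 := norm_smul_inv_norm hxy
  have hsum : x + y = ‖x + y‖ • u := (smul_inv_smul₀ (norm_ne_zero_iff.2 hxy) _).symm
  have hdecomp : x - u = (1 / 2 : ℝ) • (x - y) - (1 - ‖x + y‖ / 2) • u := by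
    linear_combination (norm := module) (1 / 2 : ℝ) • hsum
  rw [hdecomp]
  refine le_trans ?_ (norm_sub_norm_le _ _)
  rw [norm_smul, norm_smul, hu, mul_one, Real.norm_of_nonneg (by norm_num : (0 : ℝ) ≤ 1 / 2),
    Real.norm_of_nonneg (one_sub_norm_add_div_two_nonneg hx hy)]
  linarith

lemma norm_smul_add_smul_le {x u : E} {a b β : ℝ} (hx : ‖x‖ ≤ 1) (hu : ‖u‖ ≤ 1) (hb : 0 ≤ b)
    (hba : b ≤ a) (hbβ : b ≤ β) : ‖a • x + β • u‖ ≤ a + β - b * (2 - ‖x + u‖) := by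
  calc ‖a • x + β • u‖ = ‖(a - b) • x + (β - b) • u + b • (x + u)‖ := by congr 1; module
    _ ≤ ‖(a - b) • x‖ + ‖(β - b) • u‖ + ‖b • (x + u)‖ := norm_add₃_le
    _ = (a - b) * ‖x‖ + (β - b) * ‖u‖ + b * ‖x + u‖ := by
      rw [norm_smul, norm_smul, norm_smul, Real.norm_of_nonneg (sub_nonneg.2 hba),
        Real.norm_of_nonneg (sub_nonneg.2 hbβ), Real.norm_of_nonneg hb]
    _ ≤ (a - b) * 1 + (β - b) * 1 + b * ‖x + u‖ := by gcongr
    _ = a + β - b * (2 - ‖x + u‖) := by ring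

lemma modConv_mul_le_of_pair {x y : E} {a b c : ℝ} (hx : ‖x‖ ≤ 1) (hy : ‖y‖ ≤ 1)
    (hab : a + b = 1) (hb : 0 ≤ b) (hba : b ≤ a) (hc : 0 < c)
    (hcxy : c ≤ ‖x - y‖ / 2 - (1 - ‖x + y‖ / 2)) :
    modConv E (a * ‖x - y‖) ≤ a * (1 - ‖x + y‖ / 2) - 2 * b * modConv E c := by
  have hxy : x + y ≠ 0 := by
    rintro h
    rw [h, norm_zero] at hcxy
    linarith [norm_sub_le x y]
  set u := ‖x + y‖⁻¹ • (x + y)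
  have hu : ‖u‖ = 1 := norm_smul_inv_norm hxy
  have hsum : x + y = ‖x + y‖ • u := (smul_inv_smul₀ (norm_ne_zero_iff.2 hxy) _).symm
  have hxu : 2 * modConv E c ≤ 2 - ‖x + u‖ := by
    linarith [modConv_le_of_le_norm_sub hx hu.le hc.le
      (hcxy.trans (norm_sub_div_two_sub_le_norm_sub_normalize hx hy hxy))]
  have hyu : 2 * modConv E c ≤ 2 - ‖y + u‖ := by
    have := norm_sub_div_two_sub_le_norm_sub_normalize hy hx (by rwa [add_comm])
    rw [norm_sub_rev, add_comm y] at this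
    linarith [modConv_le_of_le_norm_sub hy hu.le hc.le (hcxy.trans this)]
  set β := b * (1 + 2 * modConv E c)
  have hbβ : b ≤ β := le_mul_of_one_le_right hb (by linarith [modConv_nonneg (E := E) c])
  have hball : ∀ {z : E}, ‖z‖ ≤ 1 → 2 * modConv E c ≤ 2 - ‖z + u‖ → ‖a • z + β • u‖ ≤ 1 :=
    fun hz hzu ↦ by
      linarith [norm_smul_add_smul_le hz hu.le hb hba hbβ, mul_le_mul_of_nonneg_left hzu hb]
  have hdist : ‖(a • x + β • u) - (a • y + β • u)‖ = a * ‖x - y‖ := by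
    rw [show _ - _ = a • (x - y) by module, norm_smul, Real.norm_of_nonneg (by linarith)]
  have hmid : ‖(a • x + β • u) + (a • y + β • u)‖ = a * ‖x + y‖ + 2 * β := by
    rw [show _ + _ = (a * ‖x + y‖ + 2 * β) • u by
        linear_combination (norm := module) a • hsum,
      norm_smul, hu, mul_one, Real.norm_of_nonneg (by linarith [mul_nonneg (hb.trans hba) (norm_nonneg (x + y))])]
  have := modConv_le (hball hx hxu) (hball hy hyu) hdist
  rw [hmid] at this
  linear_combination this - hab

lemma modConv_mul_le [Nontrivial E] {ε a b : ℝ} (hε : 0 < ε) (hε2 : ε ≤ 2) (hab : a + b = 1)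
    (hb : 0 ≤ b) (hba : b ≤ a) :
    modConv E (a * ε) ≤ a * modConv E ε - 2 * b * modConv E (rfun E ε) := by
  have hδε := modConv_le_half (E := E) hε.le hε2
  rcases (show 0 ≤ rfun E ε by unfold rfun; linarith).eq_or_lt with hr | hr
  · have hδε' : modConv E ε = ε / 2 := by unfold rfun at hr; linarith
    rw [← hr, modConv_zero, hδε']
    have ha1 : a ≤ 1 := by linarith
    linarith [modConv_le_half (E := E) (mul_nonneg (hb.trans hba) hε.le)
      ((mul_le_of_le_one_left hε.le ha1).trans hε2)]
  · refine le_of_forall_pos_lt_add fun θ hθ ↦ ?_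
    obtain ⟨x, y, hx, hy, rfl, hxy⟩ :=
      exists_lt_modConv_add (E := E) hε.le hε2 (lt_min hθ (by linarith : 0 < 3 * rfun E ε))
    have hmin := min_le_left θ (3 * rfun E ‖x - y‖)
    have hmin' := min_le_right θ (3 * rfun E ‖x - y‖)
    have hrfun : modConv E ‖x - y‖ = ‖x - y‖ / 2 - 4 * rfun E ‖x - y‖ := by unfold rfun; ring
    refine (modConv_mul_le_of_pair hx hy hab hb hba hr (by linarith)).trans_lt ?_
    have ha : 0 < a := by linarith
    linarith [mul_lt_mul_of_pos_left hxy ha, mul_le_mul_of_nonneg_left hmin ha.le,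
      mul_le_of_le_one_left hθ.le (by linarith : a ≤ 1)]

end

theorem stmt1_general {E : Type*} [NormedAddCommGroup E] [NormedSpace ℝ E]
    (hE : UnifConvexSpace E)
    (ε η : ℝ) (h2 : ε/2 < η) (h3 : η < ε) (h4 : ε < 2) :
    modConv E η / η ≤
      modConv E ε / ε - 2 * ((ε - η) / (ε * η)) * modConv E (rfun E ε) := by
  have := hE.nontrivial
  have hε : 0 < ε := by linarith
  have hη : 0 < η := by linarith
  have key := modConv_mul_le (E := E) hε h4.le (a := η / ε) (b := (ε - η) / ε)
    (by field_simp; ring) (div_nonneg (by linarith) hε.le)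
    (div_le_div_of_nonneg_right (by linarith) hε.le)
  rw [div_mul_cancel₀ η hε.ne'] at key
  rw [div_le_iff₀ hη]
  calc modConv E η ≤ _ := key
    _ = _ := by field_simp

/-- Lemma 1.2. -/
theorem stmt1 {E : Type*} [NormedAddCommGroup E] [NormedSpace ℝ E] [CompleteSpace E]
    (hE : UnifConvexSpace E)
    (ε η : ℝ) (h1 : 0 < ε/2) (h2 : ε/2 < η) (h3 : η < ε) (h4 : ε < 2) :
    modConv E η / η ≤
      modConv E ε / ε - 2 * ((ε - η) / (ε * η)) * modConv E (rfun E ε) :=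
  stmt1_general hE ε η h2 h3 h4
end
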